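/- If v ∈ ℂ^{n+1} is an eigenvector of ♯F corresponding to a nonzero real eigenvalue a, then v is a real null vector: there exist c ∈ ℂ and w ∈ ℝ^{n+1} with η(w, w) = 0 such that v = c·w. -/
import Mathlib


open Matrix BigOperators Finset

noncomputable section

/-- The Minkowski metric `η = diag(−1,1,…,1)` on `ℝ^{n,1}`. -/
def eta (n : ℕ) : Matrix (Fin (n+1)) (Fin (n+1)) ℝ :=
  Matrix.diagonal (fun i => if (i : ℕ) = 0 then -1 else 1)

/-- `dx^μ dx^ν`: the antisymmetric matrix with `(μ,ν)` entry `+1`,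
`(ν,μ)` entry `−1`, all other entries `0`. -/
def dx (n μ ν : ℕ) : Matrix (Fin (n+1)) (Fin (n+1)) ℝ :=
  Matrix.of fun i j =>
    if (i : ℕ) = μ ∧ (j : ℕ) = ν then 1
    else if (i : ℕ) = ν ∧ (j : ℕ) = μ then -1 else 0

/-- The operator `♯F = η⁻¹ F` as a complex matrix acting on `ℂ^{n+1}`. -/
def sharp {n : ℕ} (F : Matrix (Fin (n+1)) (Fin (n+1)) ℝ) :
    Matrix (Fin (n+1)) (Fin (n+1)) ℂ :=
  ((eta n)⁻¹ * F).map (Complex.ofReal)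

/-- The bilinear form `η` extended complex-bilinearly to `ℂ^{n+1}`. -/
def etaC {n : ℕ} (v w : Fin (n+1) → ℂ) : ℂ :=
  ∑ i : Fin (n+1), (if (i : ℕ) = 0 then (-1 : ℂ) else 1) * v i * w i

/-- The bilinear form `η` on `ℝ^{n+1}`. -/
def etaR {n : ℕ} (v w : Fin (n+1) → ℝ) : ℝ :=
  ∑ i : Fin (n+1), (if (i : ℕ) = 0 then (-1 : ℝ) else 1) * v i * w i

/-- `v` is an eigenvector of `M` with eigenvalue `lam`. -/
def IsEigenpair {n : ℕ} (M : Matrix (Fin (n+1)) (Fin (n+1)) ℂ) (lam : ℂ)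
    (v : Fin (n+1) → ℂ) : Prop :=
  v ≠ 0 ∧ M.mulVec v = lam • v

/-- `lam` is an eigenvalue of the matrix `M`. -/
def HasEigenvalue' {n : ℕ} (M : Matrix (Fin (n+1)) (Fin (n+1)) ℂ) (lam : ℂ) : Prop :=
  ∃ v, IsEigenpair M lam v

lemma eta_mul_self (n : ℕ) : eta n * eta n = 1 := by
  rw [eta, Matrix.diagonal_mul_diagonal]
  ext i j
  by_cases h : i = j <;> simp [Matrix.diagonal_apply, Matrix.one_apply, h]
  split_ifs <;> norm_num

lemma eta_inv (n : ℕ) : (eta n)⁻¹ = eta n :=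
  Matrix.inv_eq_right_inv (eta_mul_self n)

lemma sharp_apply {n : ℕ} (F : Matrix (Fin (n+1)) (Fin (n+1)) ℝ) (i j : Fin (n+1)) :
    sharp F i j = (((if (i : ℕ) = 0 then (-1:ℝ) else 1) * F i j : ℝ) : ℂ) := by
  rw [sharp, eta_inv]
  simp [eta, Matrix.map_apply, Matrix.diagonal_mul]

lemma etaC_sharp {n : ℕ} (F : Matrix (Fin (n+1)) (Fin (n+1)) ℝ) (p q : Fin (n+1) → ℂ) :
    etaC ((sharp F).mulVec p) q = ∑ i, ∑ j, (F i j : ℂ) * p j * q i := by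
  unfold etaC
  refine Finset.sum_congr rfl fun i _ => ?_
  rw [Matrix.mulVec, dotProduct]
  simp only [sharp_apply]
  rw [Finset.mul_sum, Finset.sum_mul]
  refine Finset.sum_congr rfl fun j _ => ?_
  split_ifs <;> push_cast <;> ring

lemma double_antisym {n : ℕ} (F : Matrix (Fin (n+1)) (Fin (n+1)) ℝ) (hF : Fᵀ = -F)
    (p q : Fin (n+1) → ℂ) :
    (∑ i, ∑ j, (F i j : ℂ) * p j * q i) = -∑ i, ∑ j, (F i j : ℂ) * q j * p i := by
  rw [Finset.sum_comm, ← Finset.sum_neg_distrib]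
  refine Finset.sum_congr rfl fun i _ => ?_
  rw [← Finset.sum_neg_distrib]
  refine Finset.sum_congr rfl fun j _ => ?_
  have : F j i = -F i j := by
    have := congrFun (congrFun hF i) j
    simpa [Matrix.transpose_apply] using this
  rw [this]; push_cast; ring

lemma etaC_symm {n : ℕ} (p q : Fin (n+1) → ℂ) : etaC p q = etaC q p := by
  unfold etaC; exact Finset.sum_congr rfl fun i _ => by ring

lemma etaC_smul_left {n : ℕ} (a : ℂ) (p q : Fin (n+1) → ℂ) :
    etaC (a • p) q = a * etaC p q := by
  unfold etaC; rw [Finset.mul_sum]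
  exact Finset.sum_congr rfl fun i _ => by simp [Pi.smul_apply]; ring

lemma etaR_null_of_zero {n : ℕ} (u : Fin (n+1) → ℝ) (h0 : u 0 = 0)
    (h : etaR u u = 0) : u = 0 := by
  have hterm : ∀ i ∈ (Finset.univ : Finset (Fin (n+1))),
      (0:ℝ) ≤ (if (i : ℕ) = 0 then (-1 : ℝ) else 1) * u i * u i := by
    intro i _
    by_cases hi : (i : ℕ) = 0
    · have hieq : i = 0 := Fin.ext (by simp [hi])
      simp [hi, hieq, h0]
    · simp only [hi, if_neg, if_false]
      nlinarith [mul_self_nonneg (u i)]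
  have := (Finset.sum_eq_zero_iff_of_nonneg hterm).1 h
  funext i
  have hi := this i (Finset.mem_univ i)
  by_cases hik : (i : ℕ) = 0
  · have hieq : i = 0 := Fin.ext (by simp [hik])
    simp [hieq, h0]
  · simp [hik] at hi
    simpa using hi

lemma etaC_re {n : ℕ} (p q : Fin (n+1) → ℂ) :
    (etaC p q).re = etaR (fun i => (p i).re) (fun i => (q i).re)
      - etaR (fun i => (p i).im) (fun i => (q i).im) := by
  unfold etaC etaR
  rw [Complex.re_sum, ← Finset.sum_sub_distrib]
  refine Finset.sum_congr rfl fun i _ => ?_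
  split_ifs <;> simp [Complex.mul_re] <;> ring

lemma etaC_im {n : ℕ} (p q : Fin (n+1) → ℂ) :
    (etaC p q).im = etaR (fun i => (p i).re) (fun i => (q i).im)
      + etaR (fun i => (p i).im) (fun i => (q i).re) := by
  unfold etaC etaR
  rw [Complex.im_sum, ← Finset.sum_add_distrib]
  refine Finset.sum_congr rfl fun i _ => ?_
  split_ifs <;> simp [Complex.mul_im, Complex.mul_re] <;> ring

lemma etaR_symm {n : ℕ} (p q : Fin (n+1) → ℝ) : etaR p q = etaR q p := by
  unfold etaR; exact Finset.sum_congr rfl fun i _ => by ring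

lemma etaR_neg_left {n : ℕ} (p q : Fin (n+1) → ℝ) :
    etaR (fun i => -(p i)) q = -etaR p q := by
  unfold etaR; rw [← Finset.sum_neg_distrib]
  exact Finset.sum_congr rfl fun i _ => by ring

/-- An eigenvector of `♯F` for a nonzero real eigenvalue is a real null
vector, i.e. a complex multiple of a real vector `w` with `η(w,w) = 0`. -/
theorem eigenvector_real_eigenvalue_real_null (n : ℕ)
    (F : Matrix (Fin (n+1)) (Fin (n+1)) ℝ) (hF : Fᵀ = -F)
    (a : ℝ) (ha : a ≠ 0) (v : Fin (n+1) → ℂ)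
    (hv : IsEigenpair (sharp F) (a : ℂ) v) :
    ∃ (c : ℂ) (w : Fin (n+1) → ℝ), etaR w w = 0 ∧
      v = fun i => c * (w i : ℂ) := by
  obtain ⟨hvne, hveq⟩ := hv
  have haC : (a : ℂ) ≠ 0 := by exact_mod_cast ha
  have key : ∀ p q : Fin (n+1) → ℂ,
      etaC ((sharp F).mulVec p) q = -etaC ((sharp F).mulVec q) p := by
    intro p q
    rw [etaC_sharp, etaC_sharp, double_antisym F hF]
  -- conjugate vector
  set vb : Fin (n+1) → ℂ := fun i => starRingEnd ℂ (v i) with hvb_def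
  have hvbeq : (sharp F).mulVec vb = (a : ℂ) • vb := by
    funext i
    have h1 : ((sharp F).mulVec vb) i = starRingEnd ℂ (((sharp F).mulVec v) i) := by
      rw [Matrix.mulVec, Matrix.mulVec, dotProduct, dotProduct, map_sum]
      refine Finset.sum_congr rfl fun j _ => ?_
      rw [sharp_apply]
      simp [hvb_def]
    rw [h1, hveq]
    simp [hvb_def, Pi.smul_apply, smul_eq_mul]
  have hMv : etaC ((sharp F).mulVec v) v = (a : ℂ) * etaC v v := by
    rw [hveq, etaC_smul_left]
  have h1 : etaC v v = 0 := by
    have hk := key v v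
    rw [hMv] at hk
    have h2' : (2 : ℂ) * ((a:ℂ) * etaC v v) = 0 := by linear_combination hk
    have h3' : (a:ℂ) * etaC v v = 0 := (mul_eq_zero.mp h2').resolve_left two_ne_zero
    exact (mul_eq_zero.mp h3').resolve_left haC
  have h2 : etaC vb v = 0 := by
    have hk := key vb v
    rw [hvbeq, hveq, etaC_smul_left, etaC_smul_left, etaC_symm v vb] at hk
    have h2' : (2 : ℂ) * ((a:ℂ) * etaC vb v) = 0 := by linear_combination hk
    have h3' : (a:ℂ) * etaC vb v = 0 := (mul_eq_zero.mp h2').resolve_left two_ne_zero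
    exact (mul_eq_zero.mp h3').resolve_left haC
  -- real and imaginary parts
  set x : Fin (n+1) → ℝ := fun i => (v i).re with hx_def
  set y : Fin (n+1) → ℝ := fun i => (v i).im with hy_def
  have hre1 : etaR x x - etaR y y = 0 := by
    have := congrArg Complex.re h1
    rwa [etaC_re] at this
  have him1 : etaR x y + etaR y x = 0 := by
    have := congrArg Complex.im h1
    rwa [etaC_im] at this
  have hre2 : etaR x x + etaR y y = 0 := by
    have h2re := congrArg Complex.re h2
    rw [etaC_re] at h2re
    have e1 : (fun i => (vb i).re) = x := by funext i; simp [hvb_def, hx_def]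
    have e2 : (fun i => (vb i).im) = fun i => -(y i) := by funext i; simp [hvb_def, hy_def]
    rw [e1, e2, ← hx_def, ← hy_def, etaR_neg_left, Complex.zero_re] at h2re
    linarith
  have hxx : etaR x x = 0 := by linarith
  have hyy : etaR y y = 0 := by linarith
  have hxy : etaR x y = 0 := by
    have := etaR_symm x y
    linarith
  -- the vector z = x0 • y - y0 • x is null with vanishing time component
  set z : Fin (n+1) → ℝ := fun i => x 0 * y i - y 0 * x i with hz_def
  have hz0 : z 0 = 0 := by simp [hz_def]; ring
  have hzz : etaR z z = 0 := by
    have hcalc : etaR z z = x 0 ^ 2 * etaR y y - (2 * (x 0 * y 0)) * etaR x y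
        + y 0 ^ 2 * etaR x x := by
      unfold etaR
      rw [Finset.mul_sum, Finset.mul_sum, Finset.mul_sum, ← Finset.sum_sub_distrib,
        ← Finset.sum_add_distrib]
      exact Finset.sum_congr rfl fun i _ => by simp only [hz_def]; ring
    rw [hcalc, hxx, hyy, hxy]; ring
  have hz : z = 0 := etaR_null_of_zero z hz0 hzz
  have hzi : ∀ i, x 0 * y i = y 0 * x i := by
    intro i
    have := congrFun hz i
    simp [hz_def] at this
    linarith
  by_cases hx0 : x 0 = 0
  · by_cases hy0 : y 0 = 0
    · exfalso
      have hx : x = 0 := etaR_null_of_zero x hx0 hxx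
      have hy : y = 0 := etaR_null_of_zero y hy0 hyy
      apply hvne
      funext i
      have hxi := congrFun hx i
      have hyi := congrFun hy i
      simp [hx_def] at hxi
      simp [hy_def] at hyi
      apply Complex.ext <;> simpa
    · refine ⟨Complex.I, y, hyy, funext fun i => ?_⟩
      have hxi : x i = 0 := by
        have := hzi i
        rw [hx0] at this
        simp at this
        rcases this with h | h
        · exact absurd h hy0
        · exact h
      apply Complex.ext
      · simp only [Complex.mul_re, Complex.I_re, Complex.I_im, Complex.ofReal_re,
          Complex.ofReal_im]
        simpa using hxi
      · simp only [Complex.mul_im, Complex.I_re, Complex.I_im, Complex.ofReal_re,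
          Complex.ofReal_im]
        show y i = 0 * 0 + 1 * y i
        ring
  · refine ⟨1 + ((y 0 / x 0 : ℝ) : ℂ) * Complex.I, x, hxx, funext fun i => ?_⟩
    have hyi : y i = y 0 / x 0 * x i := by
      field_simp
      have := hzi i
      linarith
    apply Complex.ext
    · simp only [Complex.add_re, Complex.mul_re, Complex.add_im, Complex.mul_im,
        Complex.I_re, Complex.I_im, Complex.one_re, Complex.one_im, Complex.ofReal_re,
        Complex.ofReal_im]
      show x i = _
      ring
    · simp only [Complex.add_re, Complex.mul_re, Complex.add_im, Complex.mul_im,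
        Complex.I_re, Complex.I_im, Complex.one_re, Complex.one_im, Complex.ofReal_re,
        Complex.ofReal_im]
      show y i = _
      rw [hyi]; ring
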